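/- arXiv:1007.2010 — 2 statements merged into one kernel-verified Lean document; each statement's English description precedes it below -/
import Mathlib

section
/- Let N be a positive even integer and let h = (a b; c d) ∈ SL(2,ℤ). Then there exists a unitary operator ρ(h) on the space of functions ℤ/Nℤ → ℂ (with inner product ⟨f,g⟩ = Σ_m f(m)·conj(g(m))) satisfying the exact Egorov identity ρ(h)∘W(p,q,0)∘ρ(h)⁻¹ = W(ap+bq, cp+dq, 0) for all integers p, q. Moreover ρ(h) is unique up to multiplication by a constant: if A and B are invertible linear operators each satisfying this identity for all p, q, then B = λ·A for some nonzero λ ∈ ℂ. -/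
open Complex

/-- The Schrödinger representation: the operator `W(p,q,k)` acting on functions
`ZMod N → ℂ`. -/
noncomputable def W (N : ℕ) (p q k : ℤ) (f : ZMod N → ℂ) : ZMod N → ℂ :=
  fun m =>
    Complex.exp (Real.pi * Complex.I * ((k : ℂ) - p * q) / N) *
    Complex.exp (-2 * Real.pi * Complex.I * q * ((m.val : ℂ) - p) / N) *
    f (m - (p : ZMod N))

/-!
The matrices `g ∈ SL(2,ℤ)` for which some unitary operator intertwines `W(v)` with `W(g v)`
form a subgroup, so it suffices to treat the generators `S` and `T`. For `S` the normalized
discrete Fourier transform works. For `S T⁻¹ S⁻¹ = (1 0; 1 1)`, and hence for `T`,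
multiplication by the chirp `m ↦ exp(-iπ m²/N)` works; the chirp is a function on `ℤ/Nℤ`
only because `N` is even.

For uniqueness, `A⁻¹ B` commutes with every `W(p,q,0)`. Commuting with the diagonal operator
`W(0,1,0)`, whose eigenvalues `exp(-2πi m/N)` are distinct, makes it diagonal in the basis of
point masses, and commuting with the shift `W(1,0,0)` makes the diagonal constant.
-/

open Finset ZMod Matrix ModularGroup
open scoped MatrixGroups

noncomputable def phase (N : ℕ) (k : ℤ) : Circle := Circle.exp (Real.pi * k / N)

noncomputable def chirp (N : ℕ) (m : ZMod N) : Circle := phase N (-(m.val : ℤ) ^ 2)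

noncomputable def weyl (N : ℕ) (v : Fin 2 → ℤ) : (ZMod N → ℂ) → ZMod N → ℂ :=
  W N (v 0) (v 1) 0

section
variable {N : ℕ}

lemma phase_zero : phase N 0 = 1 := by simp [phase]

lemma phase_add (j k : ℤ) : phase N (j + k) = phase N j * phase N k := by
  rw [phase, phase, phase, ← Circle.exp_add]; congr 1; push_cast; ring

def IsEgorov (g : SL(2, ℤ)) (ρ : (ZMod N → ℂ) ≃ₗ[ℂ] (ZMod N → ℂ)) : Prop :=
  ∀ (v : Fin 2 → ℤ) (f : ZMod N → ℂ), ρ (weyl N v f) = weyl N (g *ᵥ v) (ρ f)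

lemma isEgorov_one : IsEgorov 1 (LinearEquiv.refl ℂ (ZMod N → ℂ)) := by
  simp [IsEgorov]

lemma IsEgorov.trans {g h : SL(2, ℤ)} {ρ σ : (ZMod N → ℂ) ≃ₗ[ℂ] (ZMod N → ℂ)}
    (hσ : IsEgorov g σ) (hρ : IsEgorov h ρ) : IsEgorov (g * h) (ρ.trans σ) := by
  intro v f
  simp only [LinearEquiv.trans_apply, hρ v, hσ _, Matrix.SpecialLinearGroup.coe_mul,
    mulVec_mulVec]

lemma IsEgorov.symm {g : SL(2, ℤ)} {ρ : (ZMod N → ℂ) ≃ₗ[ℂ] (ZMod N → ℂ)} (hρ : IsEgorov g ρ) :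
    IsEgorov g⁻¹ ρ.symm := by
  intro v f
  have := hρ ((g⁻¹ : SL(2, ℤ)) *ᵥ v) (ρ.symm f)
  rw [mulVec_mulVec, ← Matrix.SpecialLinearGroup.coe_mul, mul_inv_cancel,
    Matrix.SpecialLinearGroup.coe_one, one_mulVec, LinearEquiv.apply_symm_apply] at this
  rw [← this, LinearEquiv.symm_apply_apply]

lemma isEgorov_iff {g : SL(2, ℤ)} {a b c d : ℤ}
    (hg : (g : Matrix (Fin 2) (Fin 2) ℤ) = !![a, b; c, d])
    (ρ : (ZMod N → ℂ) ≃ₗ[ℂ] (ZMod N → ℂ)) :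
    IsEgorov g ρ ↔ ∀ (p q : ℤ) (f : ZMod N → ℂ),
      ρ (W N p q 0 f) = W N (a * p + b * q) (c * p + d * q) 0 (ρ f) := by
  refine ⟨fun h p q f => ?_, fun h v f => ?_⟩
  · simpa [weyl, hg, mulVec, dotProduct, Fin.sum_univ_two, mul_comm] using h ![p, q] f
  · simpa [weyl, hg, mulVec, dotProduct, Fin.sum_univ_two] using h (v 0) (v 1) f

noncomputable def circleMul (u : ZMod N → Circle) : (ZMod N → ℂ) ≃ₗ[ℂ] (ZMod N → ℂ) :=
  LinearEquiv.piCongrRight fun m => LinearEquiv.smulOfUnit (Circle.toUnits (u m))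

lemma circleMul_apply (u : ZMod N → Circle) (f : ZMod N → ℂ) (m : ZMod N) :
    circleMul u f m = u m * f m := rfl

end

section
variable {N : ℕ} [NeZero N]

lemma coe_phase_two_mul (k : ℤ) : (phase N (2 * k) : ℂ) = stdAddChar (k : ZMod N) := by
  rw [stdAddChar_coe, phase, Circle.coe_exp]; congr 1; push_cast; ring

lemma phase_two_mul_natCast_mul (t : ℤ) : phase N (2 * N * t) = 1 := by
  ext
  rw [mul_assoc, coe_phase_two_mul]
  simp

lemma phase_neg_sq_eq_of_intCast_eq (hN : Even N) {x y : ℤ} (h : (x : ZMod N) = y) :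
    phase N (-y ^ 2) = phase N (-x ^ 2) := by
  obtain ⟨v, hv⟩ := hN
  obtain ⟨t, ht⟩ := (ZMod.intCast_eq_intCast_iff_dvd_sub x y N).1 h
  have hy : -y ^ 2 = -x ^ 2 + 2 * N * (-(x * t) - v * t ^ 2) := by
    rw [show y = x + N * t by linarith, hv]; push_cast; ring
  rw [hy, phase_add, phase_two_mul_natCast_mul, mul_one]

lemma W_apply (p q : ℤ) (f : ZMod N → ℂ) (m : ZMod N) :
    W N p q 0 f m = phase N (p * q) * stdAddChar (-((q : ZMod N) * m)) * f (m - p) := by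
  have hχ : stdAddChar (-((q : ZMod N) * m)) = phase N (2 * -(q * m.val)) := by
    rw [coe_phase_two_mul]; push_cast; simp
  rw [hχ, ← Circle.coe_mul, ← phase_add, phase, Circle.coe_exp, W, ← Complex.exp_add]
  congr 2
  push_cast
  ring

lemma W_smul (p q : ℤ) (c : ℂ) (f : ZMod N → ℂ) : W N p q 0 (c • f) = c • W N p q 0 f := by
  funext m
  simp only [W_apply, Pi.smul_apply, smul_eq_mul]
  ring

lemma W_zero_one_apply (f : ZMod N → ℂ) (m : ZMod N) : W N 0 1 0 f m = stdAddChar (-m) * f m := by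
  simp [W_apply, phase_zero]

lemma W_one_zero_apply (f : ZMod N → ℂ) (m : ZMod N) : W N 1 0 0 f m = f (m - 1) := by
  simp [W_apply, phase_zero]

def IsUnitaryOperator (ρ : (ZMod N → ℂ) ≃ₗ[ℂ] (ZMod N → ℂ)) : Prop :=
  ∀ f g : ZMod N → ℂ,
    ∑ m : ZMod N, ρ f m * starRingEnd ℂ (ρ g m) = ∑ m : ZMod N, f m * starRingEnd ℂ (g m)

lemma IsUnitaryOperator.refl : IsUnitaryOperator (LinearEquiv.refl ℂ (ZMod N → ℂ)) :=
  fun _ _ => rfl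

lemma IsUnitaryOperator.trans {ρ σ : (ZMod N → ℂ) ≃ₗ[ℂ] (ZMod N → ℂ)} (hρ : IsUnitaryOperator ρ)
    (hσ : IsUnitaryOperator σ) : IsUnitaryOperator (ρ.trans σ) :=
  fun f g => (hσ (ρ f) (ρ g)).trans (hρ f g)

lemma IsUnitaryOperator.symm {ρ : (ZMod N → ℂ) ≃ₗ[ℂ] (ZMod N → ℂ)} (hρ : IsUnitaryOperator ρ) :
    IsUnitaryOperator ρ.symm := fun f g => by
  simpa using (hρ (ρ.symm f) (ρ.symm g)).symm

variable (N) in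
def egorovSubgroup : Subgroup SL(2, ℤ) where
  carrier := {g | ∃ ρ : (ZMod N → ℂ) ≃ₗ[ℂ] (ZMod N → ℂ), IsUnitaryOperator ρ ∧ IsEgorov g ρ}
  one_mem' := ⟨_, .refl, isEgorov_one⟩
  mul_mem' := by
    rintro g h ⟨σ, hσu, hσ⟩ ⟨ρ, hρu, hρ⟩
    exact ⟨ρ.trans σ, hρu.trans hσu, hσ.trans hρ⟩
  inv_mem' := by
    rintro g ⟨ρ, hρu, hρ⟩
    exact ⟨ρ.symm, hρu.symm, hρ.symm⟩

lemma sum_stdAddChar_mul (t : ZMod N) :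
    ∑ k : ZMod N, (stdAddChar (k * t) : ℂ) = if t = 0 then (N : ℂ) else 0 := by
  rw [AddChar.sum_mulShift t (isPrimitive_stdAddChar N), ZMod.card]
  split_ifs <;> simp

lemma dft_parseval (f g : ZMod N → ℂ) :
    ∑ k, dft f k * starRingEnd ℂ (dft g k) = N * ∑ j, f j * starRingEnd ℂ (g j) := by
  have hconj (l k : ZMod N) : starRingEnd ℂ (stdAddChar (-(l * k))) = stdAddChar (l * k) := by
    rw [← AddChar.map_neg_eq_conj, neg_neg]
  have hexpand (k : ZMod N) : dft f k * starRingEnd ℂ (dft g k) =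
      ∑ j, ∑ l, f j * starRingEnd ℂ (g l) * stdAddChar (k * (l - j)) := by
    simp only [dft_apply, smul_eq_mul, map_sum, map_mul, hconj, sum_mul_sum]
    refine sum_congr rfl fun j _ => sum_congr rfl fun l _ => ?_
    rw [show k * (l - j) = -(j * k) + l * k by ring, AddChar.map_add_eq_mul]
    ring
  simp only [hexpand]
  rw [sum_comm, mul_sum]
  refine sum_congr rfl fun j _ => ?_
  rw [sum_comm]
  simp only [← mul_sum, sum_stdAddChar_mul, sub_eq_zero, mul_ite, mul_zero, sum_ite_eq',
    mem_univ, if_true]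
  ring

lemma dft_W (p q : ℤ) (f : ZMod N → ℂ) : dft (W N p q 0 f) = W N (-q) p 0 (dft f) := by
  ext k
  simp only [W_apply, dft_apply, smul_eq_mul, mul_sum]
  rw [← Equiv.sum_comp (Equiv.addRight (p : ZMod N))]
  refine sum_congr rfl fun j _ => ?_
  have hphase : (phase N (p * q) : ℂ) =
      phase N (-q * p) * stdAddChar ((p : ZMod N) * (q : ZMod N)) := by
    rw [← Int.cast_mul, ← coe_phase_two_mul, ← Circle.coe_mul, ← phase_add]; congr 2; ring
  simp only [Equiv.coe_addRight, add_sub_cancel_right, hphase, Int.cast_neg, sub_neg_eq_add]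
  have hχ : (stdAddChar (-((j + (p : ZMod N)) * k)) : ℂ) *
      stdAddChar ((p : ZMod N) * (q : ZMod N)) * stdAddChar (-((q : ZMod N) * (j + (p : ZMod N)))) =
        stdAddChar (-((p : ZMod N) * k)) * stdAddChar (-(j * (k + (q : ZMod N)))) := by
    simp only [← AddChar.map_add_eq_mul]; congr 1; ring
  linear_combination (phase N (-q * p) * f j : ℂ) * hχ

variable (N) in
noncomputable def unitaryDFT : (ZMod N → ℂ) ≃ₗ[ℂ] (ZMod N → ℂ) :=
  dft.trans (LinearEquiv.smulOfNeZero ℂ _ ((√N : ℝ) : ℂ)⁻¹ (by simp [NeZero.ne N]))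

lemma unitaryDFT_apply (f : ZMod N → ℂ) : unitaryDFT N f = ((√N : ℝ) : ℂ)⁻¹ • dft f := rfl

lemma isUnitaryOperator_unitaryDFT : IsUnitaryOperator (unitaryDFT N) := by
  intro f g
  set c : ℂ := ((√N : ℝ) : ℂ)⁻¹
  have hc : c * starRingEnd ℂ c * N = 1 := by
    rw [map_inv₀, conj_ofReal, ← mul_inv, ← ofReal_mul, Real.mul_self_sqrt (Nat.cast_nonneg N)]
    simp [NeZero.ne N]
  simp only [unitaryDFT_apply, Pi.smul_apply, smul_eq_mul, map_mul]
  calc ∑ k, c * dft f k * (starRingEnd ℂ c * starRingEnd ℂ (dft g k))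
      = c * starRingEnd ℂ c * ∑ k, dft f k * starRingEnd ℂ (dft g k) := by
        rw [mul_sum]; exact sum_congr rfl fun k _ => by ring
    _ = _ := by rw [dft_parseval, ← mul_assoc, hc, one_mul]

lemma isEgorov_unitaryDFT : IsEgorov S (unitaryDFT N) := by
  rw [isEgorov_iff coe_S]
  intro p q f
  simp [unitaryDFT_apply, dft_W, W_smul]

lemma isUnitaryOperator_circleMul (u : ZMod N → Circle) : IsUnitaryOperator (circleMul u) := by
  intro f g
  refine sum_congr rfl fun m _ => ?_
  have hu : (u m : ℂ) * starRingEnd ℂ (u m) = 1 := by simp [mul_conj]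
  rw [circleMul_apply, circleMul_apply, map_mul]
  linear_combination f m * starRingEnd ℂ (g m) * hu

lemma chirp_intCast (hN : Even N) (x : ℤ) : chirp N x = phase N (-x ^ 2) :=
  phase_neg_sq_eq_of_intCast_eq hN (by simp)

lemma isEgorov_circleMul_chirp (hN : Even N) :
    IsEgorov (S * T⁻¹ * S⁻¹) (circleMul (chirp N)) := by
  have hL : ((S * T⁻¹ * S⁻¹ : SL(2, ℤ)) : Matrix (Fin 2) (Fin 2) ℤ) = !![1, 0; 1, 1] := by
    simp [coe_S, Matrix.SpecialLinearGroup.coe_inv, adjugate_fin_two]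
  rw [isEgorov_iff hL]
  intro p q f
  funext m
  obtain ⟨x, rfl⟩ := ZMod.intCast_surjective m
  simp only [circleMul_apply, W_apply, one_mul, zero_mul, add_zero]
  rw [← Int.cast_sub, chirp_intCast hN, chirp_intCast hN, ← Int.cast_mul, ← Int.cast_mul,
    ← Int.cast_neg, ← Int.cast_neg, ← coe_phase_two_mul, ← coe_phase_two_mul]
  simp only [← Circle.coe_mul, ← mul_assoc, ← phase_add]
  congr 3
  ring

lemma S_mem_egorovSubgroup : S ∈ egorovSubgroup N :=
  ⟨_, isUnitaryOperator_unitaryDFT, isEgorov_unitaryDFT⟩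

lemma T_mem_egorovSubgroup (hN : Even N) : T ∈ egorovSubgroup N := by
  have hL : S * T⁻¹ * S⁻¹ ∈ egorovSubgroup N :=
    ⟨_, isUnitaryOperator_circleMul _, isEgorov_circleMul_chirp hN⟩
  have hS := S_mem_egorovSubgroup (N := N)
  have hT : T⁻¹ = S⁻¹ * (S * T⁻¹ * S⁻¹) * S := by group
  rw [← inv_mem_iff, hT]
  exact mul_mem (mul_mem (inv_mem hS) hL) hS

lemma egorovSubgroup_eq_top (hN : Even N) : egorovSubgroup N = ⊤ := by
  rw [eq_top_iff, ← SpecialLinearGroup.SL2Z_generators, Subgroup.closure_le]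
  rintro g (rfl | rfl)
  exacts [S_mem_egorovSubgroup, T_mem_egorovSubgroup hN]

lemma apply_single_eq_zero_of_commute_W_zero_one (C : (ZMod N → ℂ) →ₗ[ℂ] (ZMod N → ℂ))
    (hC : ∀ f, C (W N 0 1 0 f) = W N 0 1 0 (C f)) {m n : ZMod N} (hmn : m ≠ n) :
    C (Pi.single n 1) m = 0 := by
  have heigen : W N 0 1 0 (Pi.single n 1) = stdAddChar (-n) • Pi.single n 1 := by
    funext k
    by_cases hk : k = n
    · subst hk; simp [W_zero_one_apply]
    · simp [W_zero_one_apply, hk]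
  have h := congrFun (hC (Pi.single n 1)) m
  rw [heigen, C.map_smul, W_zero_one_apply, Pi.smul_apply, smul_eq_mul] at h
  have hne : (stdAddChar (-n) : ℂ) ≠ stdAddChar (-m) := by
    rw [injective_stdAddChar.ne_iff, neg_inj.ne]; exact Ne.symm hmn
  exact (mul_eq_mul_right_iff.1 h).resolve_left hne

lemma apply_single_add_one_of_commute_W_one_zero (C : (ZMod N → ℂ) →ₗ[ℂ] (ZMod N → ℂ))
    (hC : ∀ f, C (W N 1 0 0 f) = W N 1 0 0 (C f)) (m n : ZMod N) :
    C (Pi.single (n + 1) 1) (m + 1) = C (Pi.single n 1) m := by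
  have hshift : W N 1 0 0 (Pi.single n 1) = Pi.single (n + 1) 1 := by
    funext k
    rw [W_one_zero_apply]
    simp only [Pi.single_apply, sub_eq_iff_eq_add]
  simpa [hshift, W_one_zero_apply] using congrFun (hC (Pi.single n 1)) (m + 1)

lemma exists_eq_smul_of_commute_W (C : (ZMod N → ℂ) →ₗ[ℂ] (ZMod N → ℂ))
    (hclock : ∀ f, C (W N 0 1 0 f) = W N 0 1 0 (C f))
    (hshift : ∀ f, C (W N 1 0 0 f) = W N 1 0 0 (C f)) :
    ∃ c : ℂ, C = c • LinearMap.id := by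
  refine ⟨C (Pi.single 0 1) 0, (Pi.basisFun ℂ (ZMod N)).ext fun n => ?_⟩
  have hdiag (k : ℕ) : C (Pi.single (k : ZMod N) 1) k = C (Pi.single 0 1) 0 := by
    induction k with
    | zero => simp
    | succ k ih => rw [Nat.cast_succ, apply_single_add_one_of_commute_W_one_zero C hshift, ih]
  funext m
  rw [Pi.basisFun_apply, LinearMap.smul_apply, LinearMap.id_apply, Pi.smul_apply, smul_eq_mul]
  by_cases hmn : m = n
  · subst hmn
    simpa using hdiag m.val
  · simp [apply_single_eq_zero_of_commute_W_zero_one C hclock hmn, hmn]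

lemma IsEgorov.exists_eq_smul {g : SL(2, ℤ)} {A B : (ZMod N → ℂ) ≃ₗ[ℂ] (ZMod N → ℂ)}
    (hA : IsEgorov g A) (hB : IsEgorov g B) : ∃ c : ℂ, c ≠ 0 ∧ ∀ f, B f = c • A f := by
  have hC : IsEgorov 1 (B.trans A.symm) := by simpa using hA.symm.trans hB
  obtain ⟨c, hc⟩ := exists_eq_smul_of_commute_W (B.trans A.symm).toLinearMap
    (fun f => by simpa [weyl] using hC ![0, 1] f) (fun f => by simpa [weyl] using hC ![1, 0] f)
  have hBA (f : ZMod N → ℂ) : B f = c • A f := by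
    simpa using congrArg A (LinearMap.congr_fun hc f)
  refine ⟨c, fun hc0 => ?_, hBA⟩
  have h := B.injective ((hBA (Pi.single 0 1)).trans (by simp [hc0]) : B (Pi.single 0 1) = B 0)
  simpa using congrFun h 0

end

/-- for `h = (a b; c d) ∈ SL(2,ℤ)` there exists a unitary operator
`ρ(h)` on `ZMod N → ℂ` satisfying the exact Egorov identity
`ρ(h)∘W(p,q,0)∘ρ(h)⁻¹ = W(ap+bq, cp+dq, 0)`, and `ρ(h)` is unique up to a constant. -/
theorem egorov_exists_unique (N : ℕ) [NeZero N] (hNeven : Even N)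
    (a b c d : ℤ) (h : a * d - b * c = 1) :
    (∃ ρ : (ZMod N → ℂ) ≃ₗ[ℂ] (ZMod N → ℂ),
      (∀ f g : ZMod N → ℂ,
        ∑ m : ZMod N, ρ f m * starRingEnd ℂ (ρ g m) =
          ∑ m : ZMod N, f m * starRingEnd ℂ (g m)) ∧
      (∀ (p q : ℤ) (f : ZMod N → ℂ),
        ρ (W N p q 0 f) = W N (a * p + b * q) (c * p + d * q) 0 (ρ f))) ∧
    (∀ A B : (ZMod N → ℂ) ≃ₗ[ℂ] (ZMod N → ℂ),
      (∀ (p q : ℤ) (f : ZMod N → ℂ),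
        A (W N p q 0 f) = W N (a * p + b * q) (c * p + d * q) 0 (A f)) →
      (∀ (p q : ℤ) (f : ZMod N → ℂ),
        B (W N p q 0 f) = W N (a * p + b * q) (c * p + d * q) 0 (B f)) →
      ∃ lam : ℂ, lam ≠ 0 ∧ ∀ f : ZMod N → ℂ, B f = lam • A f) := by
  let g : SL(2, ℤ) := ⟨!![a, b; c, d], by rw [det_fin_two_of]; exact h⟩
  have hg : (g : Matrix (Fin 2) (Fin 2) ℤ) = !![a, b; c, d] := rfl
  refine ⟨?_, fun A B hA hB => ((isEgorov_iff hg A).2 hA).exists_eq_smul ((isEgorov_iff hg B).2 hB)⟩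
  obtain ⟨ρ, hρ_unitary, hρ⟩ : g ∈ egorovSubgroup N := by
    rw [egorovSubgroup_eq_top hNeven]; trivial
  exact ⟨ρ, hρ_unitary, (isEgorov_iff hg ρ).1 hρ⟩
end

section
/- Let r ≥ 2 be an integer and N = 2r. Let V_odd be the subspace of the space of functions ℤ/2rℤ → ℂ consisting of the odd functions, i.e. those f with f(−m) = −f(m) for all m ∈ ℤ/2rℤ (a space of dimension r−1). For integers p, q, the operator L_{p,q} = W(p,q,0) + W(−p,−q,0) maps V_odd into itself, and the linear span of the restrictions of the operators L_{p,q}, over all p, q ∈ ℤ, is the space of ALL linear endomorphisms of V_odd; that is, the quantized Wilson lines span the algebra of all linear operators on the Hilbert space of the quantization of the moduli space of flat SU(2)-connections on the torus. -/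
open Complex

noncomputable def Wl (N : ℕ) (p q k : ℤ) : (ZMod N → ℂ) →ₗ[ℂ] (ZMod N → ℂ) where
  toFun := W N p q k
  map_add' f g := by funext m; simp [W]; ring
  map_smul' c f := by funext m; simp [W]; ring

noncomputable def Vodd (r : ℕ) : Submodule ℂ (ZMod (2 * r) → ℂ) where
  carrier := {f | ∀ m, f (-m) = -f m}
  add_mem' := by
    intro f g hf hg m
    simp only [Pi.add_apply, hf m, hg m]
    ring
  zero_mem' := by intro m; simp
  smul_mem' := by
    intro c f hf m
    simp only [Pi.smul_apply, hf m, smul_eq_mul]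
    ring

/-!
With `ζ = exp(πi/N)`, a primitive `2N`-th root of unity, one has
`ζ^{q(j+k)} L_{j-k,q} f(m) = ζ^{2q(j-m)} f(m-j+k) + ζ^{2q(j+m)} f(m+j-k)`, so averaging over
`q < 2N` (orthogonality of characters) leaves `f(k) (δ_j - δ_{-j})(m)` when `f` is odd.
Hence the span of the Wilson lines contains every rank-one map `f ↦ f(k) e_j`, where the
`e_j = δ_j - δ_{-j}`, `0 < j < r`, form a basis of `V_odd`: these are the matrix units of
`End(V_odd)`.
-/

open Finset

theorem ZMod.eq_natCast_iff_val_eq {N : ℕ} [NeZero N] {k : ℕ} (hk : k < N) (m : ZMod N) :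
    m = k ↔ m.val = k := by
  constructor
  · rintro rfl
    exact ZMod.val_natCast_of_lt hk
  · rintro rfl
    exact (ZMod.natCast_zmod_val m).symm

theorem ZMod.natCast_dvd_sub_val_iff (N : ℕ) [NeZero N] (j : ℤ) (m : ZMod N) :
    (N : ℤ) ∣ j - m.val ↔ m = j := by
  rw [← ZMod.intCast_eq_intCast_iff_dvd_sub, Int.cast_natCast, ZMod.natCast_zmod_val]

theorem ZMod.natCast_dvd_add_val_iff (N : ℕ) [NeZero N] (j : ℤ) (m : ZMod N) :
    (N : ℤ) ∣ j + m.val ↔ m = -j := by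
  rw [← sub_neg_eq_add, ← ZMod.intCast_eq_intCast_iff_dvd_sub, Int.cast_neg, Int.cast_natCast,
    ZMod.natCast_zmod_val, neg_eq_iff_eq_neg]

theorem IsPrimitiveRoot.sum_range_zpow_mul {K : Type*} [Field K] {ζ : K} {n : ℕ}
    (hζ : IsPrimitiveRoot ζ n) (t : ℤ) :
    ∑ q ∈ range n, ζ ^ ((q : ℤ) * t) = if (n : ℤ) ∣ t then (n : K) else 0 := by
  have hpow : ∀ q : ℕ, ζ ^ ((q : ℤ) * t) = (ζ ^ t) ^ q := fun q => by
    rw [mul_comm, zpow_mul, zpow_natCast]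
  simp only [hpow]
  split_ifs with ht
  · simp [(hζ.zpow_eq_one_iff_dvd t).mpr ht]
  · have hne : ζ ^ t ≠ 1 := fun h => ht ((hζ.zpow_eq_one_iff_dvd t).mp h)
    rw [geom_sum_eq hne, ← zpow_natCast, ← zpow_mul, mul_comm, zpow_mul,
      zpow_natCast, hζ.pow_eq_one, one_zpow, sub_self, zero_div]

noncomputable def zeta (N : ℕ) : ℂ := Complex.exp (Real.pi * Complex.I / N)

theorem isPrimitiveRoot_zeta (N : ℕ) [NeZero N] : IsPrimitiveRoot (zeta N) (2 * N) := by
  rw [zeta]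
  convert Complex.isPrimitiveRoot_exp (2 * N) (NeZero.ne _) using 2
  push_cast
  ring

theorem zeta_zpow_two_mul_eq_one (N : ℕ) [NeZero N] {x : ℤ} (hx : (N : ℤ) ∣ x) :
    zeta N ^ (2 * x) = 1 :=
  ((isPrimitiveRoot_zeta N).zpow_eq_one_iff_dvd _).mpr (by push_cast; exact mul_dvd_mul_left 2 hx)

theorem zeta_ne_zero (N : ℕ) : zeta N ≠ 0 := Complex.exp_ne_zero _

theorem W_zero_apply (N : ℕ) (p q : ℤ) (f : ZMod N → ℂ) (m : ZMod N) :
    W N p q 0 f m = zeta N ^ (p * q - 2 * q * m.val) * f (m - p) := by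
  have hexp : ∀ t : ℤ, Complex.exp (Real.pi * Complex.I * t / N) = zeta N ^ t := fun t => by
    rw [zeta, ← Complex.exp_int_mul]; ring_nf
  rw [W, show Real.pi * Complex.I * (((0 : ℤ) : ℂ) - p * q) / N
      = Real.pi * Complex.I * ((-(p * q) : ℤ) : ℂ) / N by push_cast; ring,
    show -2 * Real.pi * Complex.I * q * ((m.val : ℂ) - p) / N
      = Real.pi * Complex.I * ((-(2 * q * (m.val - p)) : ℤ) : ℂ) / N by push_cast; ring,
    hexp, hexp, ← zpow_add₀ (zeta_ne_zero N)]
  ring_nf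

theorem sum_range_zeta_zpow_mul_two_mul (N : ℕ) [NeZero N] (s : ℤ) :
    ∑ q ∈ range (2 * N), zeta N ^ ((q : ℤ) * (2 * s))
      = if (N : ℤ) ∣ s then (2 * N : ℂ) else 0 := by
  rw [(isPrimitiveRoot_zeta N).sum_range_zpow_mul]
  push_cast
  simp only [mul_dvd_mul_iff_left (two_ne_zero (α := ℤ))]

theorem zeta_zpow_mul_W_apply (N : ℕ) (a p q : ℤ) (f : ZMod N → ℂ) (m : ZMod N) :
    zeta N ^ a * W N p q 0 f m = zeta N ^ (a + p * q - 2 * q * m.val) * f (m - p) := by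
  rw [W_zero_apply, ← mul_assoc, ← zpow_add₀ (zeta_ne_zero N)]
  ring_nf

theorem sum_zeta_zpow_mul_W_add_W_apply (N : ℕ) [NeZero N] (j k : ℤ) (f : ZMod N → ℂ)
    (m : ZMod N) :
    ∑ q ∈ range (2 * N), zeta N ^ ((q : ℤ) * (j + k)) *
        (W N (j - k) q 0 f m + W N (-(j - k)) (-q) 0 f m)
      = 2 * N * ((if m = j then f k else 0) + (if m = -j then f (-k) else 0)) := by
  have h₁ : ∀ q : ℕ, zeta N ^ ((q : ℤ) * (j + k)) * W N (j - k) q 0 f m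
      = zeta N ^ ((q : ℤ) * (2 * (j - m.val))) * f (m - (j - k : ℤ)) := fun q => by
    rw [zeta_zpow_mul_W_apply]; ring_nf
  have h₂ : ∀ q : ℕ, zeta N ^ ((q : ℤ) * (j + k)) * W N (-(j - k)) (-q) 0 f m
      = zeta N ^ ((q : ℤ) * (2 * (j + m.val))) * f (m + (j - k : ℤ)) := fun q => by
    rw [zeta_zpow_mul_W_apply, Int.cast_neg, sub_neg_eq_add]; ring_nf
  rw [sum_congr rfl fun q _ => by rw [mul_add (zeta N ^ ((q : ℤ) * (j + k))), h₁, h₂],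
    sum_add_distrib, ← sum_mul, ← sum_mul, sum_range_zeta_zpow_mul_two_mul,
    sum_range_zeta_zpow_mul_two_mul]
  simp only [ZMod.natCast_dvd_sub_val_iff, ZMod.natCast_dvd_add_val_iff]
  have e₁ : (if m = j then (2 * N : ℂ) else 0) * f (m - (j - k : ℤ))
      = 2 * N * if m = j then f k else 0 := by
    split_ifs with h
    · rw [h]; push_cast; ring_nf
    · ring
  have e₂ : (if m = -j then (2 * N : ℂ) else 0) * f (m + (j - k : ℤ))
      = 2 * N * if m = -j then f (-k) else 0 := by
    split_ifs with h
    · rw [h]; push_cast; ring_nf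
    · ring
  rw [e₁, e₂, mul_add]

theorem W_neg_apply_neg (N : ℕ) [NeZero N] {f : ZMod N → ℂ} (hf : ∀ m, f (-m) = -f m)
    (p q : ℤ) (m : ZMod N) : W N (-p) (-q) 0 f (-m) = -W N p q 0 f m := by
  have hval : (N : ℤ) ∣ (-m).val + m.val := by
    rw [ZMod.natCast_dvd_add_val_iff, Int.cast_natCast, ZMod.natCast_zmod_val, neg_neg]
  rw [W_zero_apply, W_zero_apply,
    show -p * -q - 2 * -q * ((-m).val : ℤ)
      = (p * q - 2 * q * m.val) + 2 * (q * ((-m).val + m.val)) by ring,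
    zpow_add₀ (zeta_ne_zero N), zeta_zpow_two_mul_eq_one N (dvd_mul_of_dvd_right hval _),
    show -m - ((-p : ℤ) : ZMod N) = -(m - p) by push_cast; ring, hf]
  ring

section Odd

variable {r : ℕ} [NeZero r]

theorem Wl_add_Wl_neg_mem_Vodd (p q : ℤ) :
    ∀ f ∈ Vodd r, (Wl (2 * r) p q 0 + Wl (2 * r) (-p) (-q) 0) f ∈ Vodd r := by
  intro f hf m
  change W _ p q 0 f (-m) + W _ (-p) (-q) 0 f (-m) = -(W _ p q 0 f m + W _ (-p) (-q) 0 f m)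
  rw [W_neg_apply_neg _ hf, ← neg_neg p, ← neg_neg q, W_neg_apply_neg _ hf, neg_neg, neg_neg]
  ring

variable (r) in
noncomputable def wilsonLine (p q : ℤ) : Module.End ℂ (Vodd r) :=
  (Wl (2 * r) p q 0 + Wl (2 * r) (-p) (-q) 0).restrict (Wl_add_Wl_neg_mem_Vodd p q)

theorem coe_wilsonLine_apply (p q : ℤ) (f : Vodd r) :
    (wilsonLine r p q f : ZMod (2 * r) → ℂ) = W (2 * r) p q 0 f + W (2 * r) (-p) (-q) 0 f :=
  rfl

variable (r) in
noncomputable def oddDelta (a : ZMod (2 * r)) : Vodd r :=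
  ⟨Pi.single a 1 - Pi.single (-a) 1, fun m => by
    simp only [Pi.sub_apply, Pi.single_apply, neg_eq_iff_eq_neg, neg_neg]
    ring⟩

omit [NeZero r] in
theorem oddDelta_apply (a m : ZMod (2 * r)) :
    (oddDelta r a : ZMod (2 * r) → ℂ) m
      = (if m = a then 1 else 0) - if m = -a then 1 else 0 := by
  simp only [oddDelta, Pi.sub_apply, Pi.single_apply]

theorem sum_zeta_smul_wilsonLine_apply (j k : ℤ) (f : Vodd r) :
    ((2 * (2 * r) : ℂ)⁻¹ • ∑ q ∈ range (2 * (2 * r)),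
        zeta (2 * r) ^ ((q : ℤ) * (j + k)) • wilsonLine r (j - k) q) f
      = (f : ZMod (2 * r) → ℂ) k • oddDelta r j := by
  ext m
  have hf : ∀ m, (f : ZMod (2 * r) → ℂ) (-m) = -(f : ZMod (2 * r) → ℂ) m := f.2
  have h := sum_zeta_zpow_mul_W_add_W_apply (2 * r) j k f m
  push_cast at h
  simp only [LinearMap.smul_apply, LinearMap.sum_apply, Submodule.coe_smul, Submodule.coe_sum,
    Finset.sum_apply, Pi.smul_apply, smul_eq_mul, coe_wilsonLine_apply, Pi.add_apply,
    oddDelta_apply]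
  have hN : (2 * (2 * r) : ℂ) ≠ 0 := by exact_mod_cast NeZero.ne (2 * (2 * r))
  rw [h, hf, inv_mul_cancel_left₀ hN]
  split_ifs <;> ring

omit [NeZero r] in
theorem apply_eq_zero_of_neg_eq {f : ZMod (2 * r) → ℂ} (hf : f ∈ Vodd r) {m : ZMod (2 * r)}
    (hm : -m = m) : f m = 0 :=
  self_eq_neg.mp (by rw [← hf m, hm])

theorem sum_Ioo_mul_ite_eq (g : ZMod (2 * r) → ℂ) (m : ZMod (2 * r)) :
    ∑ k ∈ Ioo 0 r, g k * (if m = k then 1 else 0) = if m.val ∈ Ioo 0 r then g m else 0 := by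
  simp only [mul_ite, mul_one, mul_zero]
  rw [sum_congr rfl fun k hk =>
    if_congr (ZMod.eq_natCast_iff_val_eq (by have := (mem_Ioo.mp hk).2; omega) m) rfl rfl,
    sum_ite_eq, ZMod.natCast_zmod_val]

-- `0` and `r` are the fixed points of negation, where odd functions vanish; every other `m`
-- has exactly one of `m`, `-m` in `(0, r)`.
theorem Vodd_apply_eq {f : ZMod (2 * r) → ℂ} (hf : f ∈ Vodd r) (m : ZMod (2 * r)) :
    f m = (if m.val ∈ Ioo 0 r then f m else 0) + if (-m).val ∈ Ioo 0 r then f m else 0 := by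
  rcases eq_or_ne m 0 with rfl | hm
  · simp [apply_eq_zero_of_neg_eq hf neg_zero]
  have hneg : (-m).val = 2 * r - m.val := by rw [ZMod.neg_val, if_neg hm]
  have hpos : 0 < m.val := ZMod.val_pos.mpr hm
  have hlt : m.val < 2 * r := ZMod.val_lt m
  simp only [mem_Ioo, hneg]
  split_ifs <;> try omega
  · ring
  · ring
  · have hmr : -m = m := ZMod.val_injective _ (by omega)
    simp [apply_eq_zero_of_neg_eq hf hmr]

theorem sum_Ioo_smul_oddDelta (f : Vodd r) :
    ∑ k ∈ Ioo 0 r, (f : ZMod (2 * r) → ℂ) k • oddDelta r k = f := by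
  ext m
  have hneg : ∀ k : ZMod (2 * r), m = -k ↔ -m = k := fun k => neg_eq_iff_eq_neg.symm
  simp only [Submodule.coe_sum, Submodule.coe_smul, Finset.sum_apply, Pi.smul_apply, smul_eq_mul,
    oddDelta_apply, mul_sub, sum_sub_distrib, hneg, sum_Ioo_mul_ite_eq, f.2 m]
  conv_rhs => rw [Vodd_apply_eq f.2 m]
  split_ifs <;> ring

theorem oddDelta_natCast_apply {j k : ℕ} (hj : j ∈ Ioo 0 r) (hk : k ∈ Ioo 0 r) :
    (oddDelta r k : ZMod (2 * r) → ℂ) j = if j = k then 1 else 0 := by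
  rw [mem_Ioo] at hj hk
  have hjval : (j : ZMod (2 * r)).val = j := ZMod.val_natCast_of_lt (by omega)
  have hneg : (-(j : ZMod (2 * r))).val = 2 * r - j := by
    rw [ZMod.neg_val, if_neg fun h => by rw [h, ZMod.val_zero] at hjval; omega, hjval]
  have hk' : k < 2 * r := by omega
  simp only [oddDelta_apply, ← neg_eq_iff_eq_neg (a := (j : ZMod (2 * r))),
    ZMod.eq_natCast_iff_val_eq hk', hjval, hneg]
  split_ifs <;> first | omega | simp

theorem linearIndependent_oddDelta :
    LinearIndependent ℂ fun k : Ioo 0 r => oddDelta r (k : ℕ) := by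
  let coords : Vodd r →ₗ[ℂ] (Ioo 0 r → ℂ) :=
    LinearMap.pi fun k => (LinearMap.proj ((k : ℕ) : ZMod (2 * r))).comp (Vodd r).subtype
  refine LinearIndependent.of_comp coords ?_
  convert (Pi.basisFun ℂ (Ioo 0 r)).linearIndependent
  ext k j
  simp only [Function.comp_apply, coords, LinearMap.pi_apply, LinearMap.comp_apply,
    Submodule.subtype_apply, LinearMap.proj_apply, Pi.basisFun_apply, Pi.single_apply,
    oddDelta_natCast_apply j.2 k.2, Subtype.ext_iff]

variable (r) in
noncomputable def oddBasis : Module.Basis (Ioo 0 r) ℂ (Vodd r) :=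
  .mk linearIndependent_oddDelta fun f _ => by
    rw [← sum_Ioo_smul_oddDelta f]
    exact Submodule.sum_mem _ fun k hk =>
      Submodule.smul_mem _ _ (Submodule.subset_span ⟨⟨k, hk⟩, rfl⟩)

theorem oddBasis_apply (k : Ioo 0 r) : oddBasis r k = oddDelta r (k : ℕ) :=
  Module.Basis.mk_apply _ _ _

theorem finrank_Vodd : Module.finrank ℂ (Vodd r) = r - 1 := by
  simp [Module.finrank_eq_card_basis (oddBasis r)]

theorem oddBasis_end_mem_span_wilsonLine (jk : Ioo 0 r × Ioo 0 r) :
    (oddBasis r).end jk ∈ Submodule.span ℂ (Set.range (Function.uncurry (wilsonLine r))) := by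
  obtain ⟨j, k⟩ := jk
  have hend : (oddBasis r).end (j, k)
      = (2 * (2 * r) : ℂ)⁻¹ • ∑ q ∈ range (2 * (2 * r)),
          zeta (2 * r) ^ ((q : ℤ) * ((j : ℕ) + (k : ℕ))) •
            wilsonLine r ((j : ℕ) - (k : ℕ)) q := by
    refine (oddBasis r).ext fun k' => ?_
    rw [Module.Basis.end_apply_apply, sum_zeta_smul_wilsonLine_apply, oddBasis_apply,
      oddBasis_apply, Int.cast_natCast, Int.cast_natCast, oddDelta_natCast_apply k.2 k'.2]
    simp only [Subtype.ext_iff, ite_smul, one_smul, zero_smul]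
  rw [hend]
  exact Submodule.smul_mem _ _ (Submodule.sum_mem _ fun q _ =>
    Submodule.smul_mem _ _ (Submodule.subset_span ⟨(_, _), rfl⟩))

variable (r) in
theorem span_wilsonLine_eq_top :
    Submodule.span ℂ (Set.range (Function.uncurry (wilsonLine r))) = ⊤ :=
  eq_top_iff.mpr <| (oddBasis r).end.span_eq.ge.trans <|
    Submodule.span_le.mpr <| Set.range_subset_iff.mpr oddBasis_end_mem_span_wilsonLine

end Odd

/-- the odd subspace `V_odd ⊂ (ZMod 2r → ℂ)` has dimension `r−1`, the
quantized Wilson lines `L_{p,q} = W(p,q,0) + W(−p,−q,0)` map `V_odd` into itself, and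
the restrictions of the `L_{p,q}` to `V_odd` span the space of ALL linear
endomorphisms of `V_odd`. -/
theorem wilson_lines_span_all_operators (r : ℕ) (hr : 2 ≤ r) :
    Module.finrank ℂ (Vodd r) = r - 1 ∧
    (∀ p q : ℤ, ∀ f ∈ Vodd r,
      (Wl (2 * r) p q 0 + Wl (2 * r) (-p) (-q) 0) f ∈ Vodd r) ∧
    Submodule.span ℂ
        {g : Module.End ℂ (Vodd r) |
          ∃ (p q : ℤ)
            (h : ∀ f ∈ Vodd r, (Wl (2 * r) p q 0 + Wl (2 * r) (-p) (-q) 0) f ∈ Vodd r),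
            g = LinearMap.restrict (Wl (2 * r) p q 0 + Wl (2 * r) (-p) (-q) 0) h} = ⊤ := by
  have : NeZero r := ⟨by omega⟩
  refine ⟨finrank_Vodd, Wl_add_Wl_neg_mem_Vodd, eq_top_iff.mpr ?_⟩
  rw [← span_wilsonLine_eq_top r]
  refine Submodule.span_mono ?_
  rintro _ ⟨⟨p, q⟩, rfl⟩
  exact ⟨p, q, Wl_add_Wl_neg_mem_Vodd p q, rfl⟩
end
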